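/- Let ξ₁,…,ξ_n be iid real random variables with Eξ₁ = 0, Eξ₁² ≤ λ₁ for some constant λ₁ > 0, and E|ξ₁|³ ≤ C/λ^{3/2} for constants C > 0 and 0 < λ ≤ λ₁. Then there is a constant c, depending only on C and λ₁ (not on n or λ), such that E|∑_{i=1}^n ξ_i|³ ≤ c (n/λ)^{3/2}. -/

import Mathlib

/-!
Write `S_k = ξ_0 + ⋯ + ξ_{k-1}`. Integrating the pointwise inequality
`|x + y|³ ≤ |x|³ + 3 x|x| y + 3 y²|x| + 3 |y|³` at `x = S_k`, `y = ξ_k` and using the independence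
of `S_k` and `ξ_k`, the cross term vanishes because `Eξ_k = 0`, and the next one is
`Eξ_k² · E|S_k| ≤ λ₁ √(kλ₁)` by Cauchy–Schwarz and additivity of variance. Since
`(u + λ₁)^{3/2} ≥ u^{3/2} + λ₁ √u`, induction gives `E|S_n|³ ≤ 3 (nλ₁)^{3/2} + 3 n E|ξ_0|³`.
Finally `λ ≤ λ₁` and `n ≤ n^{3/2}` bound both terms by multiples of `(n/λ)^{3/2}`, with
`c = 3 λ₁³ + 3 C`.
-/

open MeasureTheory ProbabilityTheory Finset

lemma abs_add_pow_three_le (x y : ℝ) :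
    |x + y| ^ 3 ≤ |x| ^ 3 + 3 * (x * |x| * y) + 3 * (y ^ 2 * |x|) + 3 * |y| ^ 3 := by
  rcases abs_cases x with ⟨hx, _⟩ | ⟨hx, _⟩ <;>
  rcases abs_cases y with ⟨hy, _⟩ | ⟨hy, _⟩ <;>
  rcases abs_cases (x + y) with ⟨h, _⟩ | ⟨h, _⟩ <;>
  rw [hx, hy, h] <;>
  nlinarith [sq_nonneg x, sq_nonneg y, sq_nonneg (x + y), sq_nonneg (x - y), mul_self_nonneg (x * y)]

lemma Real.rpow_three_halves_eq_mul_sqrt {x : ℝ} (hx : 0 ≤ x) : x ^ ((3 : ℝ) / 2) = x * √x := by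
  rw [show (3 : ℝ) / 2 = 1 + 1 / 2 by norm_num, Real.rpow_add' hx (by norm_num), Real.rpow_one,
    Real.sqrt_eq_rpow]

lemma Real.rpow_three_halves_add_le {u d : ℝ} (hu : 0 ≤ u) (hd : 0 ≤ d) :
    u ^ ((3 : ℝ) / 2) + d * √u ≤ (u + d) ^ ((3 : ℝ) / 2) := by
  rw [Real.rpow_three_halves_eq_mul_sqrt hu, Real.rpow_three_halves_eq_mul_sqrt (add_nonneg hu hd), ← add_mul]
  gcongr
  linarith

lemma Real.natCast_le_rpow_of_one_le (n : ℕ) {y : ℝ} (hy : 1 ≤ y) : (n : ℝ) ≤ (n : ℝ) ^ y := by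
  rcases n.eq_zero_or_pos with rfl | hn
  · simpa using Real.rpow_nonneg le_rfl y
  · exact Real.self_le_rpow_of_one_le (by exact_mod_cast hn) hy

lemma mul_rpow_three_halves_le {x a b : ℝ} (hx : 0 ≤ x) (ha : 0 < a) (hab : a ≤ b) :
    (x * b) ^ ((3 : ℝ) / 2) ≤ b ^ 3 * (x / a) ^ ((3 : ℝ) / 2) := by
  have hb : 0 < b := ha.trans_le hab
  have hsplit : x * b = (a * b) * (x / a) := by field_simp
  have hcube : (b ^ 2) ^ ((3 : ℝ) / 2) = b ^ 3 := by
    rw [← Real.rpow_natCast, ← Real.rpow_mul hb.le]; norm_num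
  rw [hsplit, Real.mul_rpow (by positivity) (by positivity), ← hcube]
  gcongr
  nlinarith

section
variable {Ω : Type*} [MeasurableSpace Ω] {μ : Measure Ω}

lemma integral_abs_le_sqrt_integral_sq [IsProbabilityMeasure μ] {X : Ω → ℝ} (hX : MemLp X 2 μ) :
    ∫ ω, |X ω| ∂μ ≤ √(∫ ω, X ω ^ 2 ∂μ) := by
  refine Real.le_sqrt_of_sq_le ?_
  have h := variance_nonneg |X| μ
  rw [variance_eq_sub hX.abs] at h
  simpa only [Pi.pow_apply, Pi.abs_apply, sq_abs, sub_nonneg] using h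

lemma MeasureTheory.MemLp.integrable_abs_pow_three {X : Ω → ℝ} (hX : MemLp X 3 μ) :
    Integrable (fun ω => |X ω| ^ 3) μ := by
  simpa only [Real.norm_eq_abs] using hX.integrable_norm_pow (by norm_num)

lemma ProbabilityTheory.IndepFun.integral_abs_add_pow_three_le [IsFiniteMeasure μ] {X Y : Ω → ℝ}
    (hXY : IndepFun X Y μ) (hX : MemLp X 3 μ) (hY : MemLp Y 3 μ) (hY0 : ∫ ω, Y ω ∂μ = 0) :
    ∫ ω, |X ω + Y ω| ^ 3 ∂μ ≤
      ∫ ω, |X ω| ^ 3 ∂μ + 3 * ((∫ ω, Y ω ^ 2 ∂μ) * ∫ ω, |X ω| ∂μ) + 3 * ∫ ω, |Y ω| ^ 3 ∂μ := by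
  have hX2 : MemLp X 2 μ := hX.mono_exponent (by norm_num)
  have hY2 : MemLp Y 2 μ := hY.mono_exponent (by norm_num)
  have hX1 : Integrable X μ := memLp_one_iff_integrable.mp (hX.mono_exponent (by norm_num))
  have hY1 : Integrable Y μ := memLp_one_iff_integrable.mp (hY.mono_exponent (by norm_num))
  have hcross : IndepFun (fun ω => X ω * |X ω|) Y μ :=
    hXY.comp (measurable_id.mul measurable_id.abs) measurable_id
  have hsq : IndepFun (fun ω => Y ω ^ 2) (fun ω => |X ω|) μ :=
    hXY.symm.comp (measurable_id.pow_const 2) measurable_id.abs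
  have iXX : Integrable (fun ω => X ω * |X ω|) μ := by
    refine hX2.integrable_sq.mono' (hX1.1.mul hX1.1.norm) (.of_forall fun ω => ?_)
    rw [Real.norm_eq_abs, abs_mul, abs_abs, abs_mul_abs_self, sq]
  have icross : Integrable (fun ω => X ω * |X ω| * Y ω) μ := hcross.integrable_mul iXX hY1
  have isq : Integrable (fun ω => Y ω ^ 2 * |X ω|) μ :=
    hsq.integrable_mul hY2.integrable_sq hX1.abs
  have hcross0 : ∫ ω, X ω * |X ω| * Y ω ∂μ = 0 := by
    rw [hcross.integral_fun_mul_eq_mul_integral iXX.1 hY1.1, hY0, mul_zero]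
  have hsq_eq : ∫ ω, Y ω ^ 2 * |X ω| ∂μ = (∫ ω, Y ω ^ 2 ∂μ) * ∫ ω, |X ω| ∂μ :=
    hsq.integral_fun_mul_eq_mul_integral hY2.integrable_sq.1 hX1.abs.1
  have iX3 := hX.integrable_abs_pow_three
  have iY3 := hY.integrable_abs_pow_three
  have i12 : Integrable (fun ω => |X ω| ^ 3 + 3 * (X ω * |X ω| * Y ω)) μ :=
    iX3.add (icross.const_mul 3)
  have i123 : Integrable
      (fun ω => |X ω| ^ 3 + 3 * (X ω * |X ω| * Y ω) + 3 * (Y ω ^ 2 * |X ω|)) μ :=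
    i12.add (isq.const_mul 3)
  calc ∫ ω, |X ω + Y ω| ^ 3 ∂μ
      ≤ ∫ ω, (|X ω| ^ 3 + 3 * (X ω * |X ω| * Y ω) + 3 * (Y ω ^ 2 * |X ω|) + 3 * |Y ω| ^ 3) ∂μ :=
        integral_mono (hX.add hY).integrable_abs_pow_three (i123.add (iY3.const_mul 3))
          fun ω => abs_add_pow_three_le (X ω) (Y ω)
    _ = _ := by
        rw [integral_add i123 (iY3.const_mul 3), integral_add i12 (isq.const_mul 3),
          integral_add iX3 (icross.const_mul 3), integral_const_mul, integral_const_mul,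
          integral_const_mul, hcross0, hsq_eq, mul_zero, add_zero]

lemma ProbabilityTheory.iIndepFun.integral_sq_sum_range_le [IsFiniteMeasure μ] {ξ : ℕ → Ω → ℝ}
    (hindep : iIndepFun ξ μ) (hξ : ∀ i, MemLp (ξ i) 2 μ) (hmean : ∀ i, ∫ ω, ξ i ω ∂μ = 0)
    {v : ℝ} (hv : ∀ i, ∫ ω, ξ i ω ^ 2 ∂μ ≤ v) (n : ℕ) :
    ∫ ω, (∑ i ∈ range n, ξ i ω) ^ 2 ∂μ ≤ n * v := by
  have hS : ∫ ω, (∑ i ∈ range n, ξ i) ω ∂μ = 0 := by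
    simp only [Finset.sum_apply]
    rw [integral_finsetSum _ fun i _ => (hξ i).integrable (by norm_num)]
    simp [hmean]
  calc ∫ ω, (∑ i ∈ range n, ξ i ω) ^ 2 ∂μ
      = Var[∑ i ∈ range n, ξ i; μ] := by
        rw [variance_of_integral_eq_zero (aemeasurable_sum _ fun i _ => (hξ i).1.aemeasurable) hS]
        simp only [Finset.sum_apply]
    _ = ∑ i ∈ range n, Var[ξ i; μ] :=
        IndepFun.variance_sum (fun i _ => hξ i) fun i _ j _ hij => hindep.indepFun hij
    _ = ∑ i ∈ range n, ∫ ω, ξ i ω ^ 2 ∂μ :=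
        sum_congr rfl fun i _ => variance_of_integral_eq_zero (hξ i).1.aemeasurable (hmean i)
    _ ≤ n * v := by simpa using sum_le_sum fun i (_ : i ∈ range n) => hv i

lemma ProbabilityTheory.iIndepFun.integral_abs_sum_range_pow_three_le [IsProbabilityMeasure μ]
    {ξ : ℕ → Ω → ℝ} (hindep : iIndepFun ξ μ) (hξ : ∀ i, MemLp (ξ i) 3 μ)
    (hmean : ∀ i, ∫ ω, ξ i ω ∂μ = 0) {v b : ℝ} (hv : ∀ i, ∫ ω, ξ i ω ^ 2 ∂μ ≤ v)
    (hb : ∀ i, ∫ ω, |ξ i ω| ^ 3 ∂μ ≤ b) (n : ℕ) :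
    ∫ ω, |∑ i ∈ range n, ξ i ω| ^ 3 ∂μ ≤ 3 * ((n : ℝ) * v) ^ ((3 : ℝ) / 2) + 3 * (n * b) := by
  have hv0 : 0 ≤ v := (integral_nonneg fun ω => sq_nonneg _).trans (hv 0)
  have hξ2 : ∀ i, MemLp (ξ i) 2 μ := fun i => (hξ i).mono_exponent (by norm_num)
  induction n with
  | zero => simp
  | succ m ih =>
    have hS : MemLp (fun ω => ∑ i ∈ range m, ξ i ω) 3 μ := memLp_finsetSum _ fun i _ => hξ i
    have hind : IndepFun (fun ω => ∑ i ∈ range m, ξ i ω) (ξ m) μ := by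
      simpa only [Finset.sum_fn]
        using hindep.indepFun_sum_range_succ₀ (fun i => (hξ i).1.aemeasurable) m
    have hfirst : ∫ ω, |∑ i ∈ range m, ξ i ω| ∂μ ≤ √(m * v) :=
      (integral_abs_le_sqrt_integral_sq (hS.mono_exponent (by norm_num))).trans
        (Real.sqrt_le_sqrt (hindep.integral_sq_sum_range_le hξ2 hmean hv m))
    have hgrow := Real.rpow_three_halves_add_le (mul_nonneg m.cast_nonneg hv0) hv0
    simp only [sum_range_succ]
    calc ∫ ω, |∑ i ∈ range m, ξ i ω + ξ m ω| ^ 3 ∂μ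
        ≤ ∫ ω, |∑ i ∈ range m, ξ i ω| ^ 3 ∂μ
          + 3 * ((∫ ω, ξ m ω ^ 2 ∂μ) * ∫ ω, |∑ i ∈ range m, ξ i ω| ∂μ)
          + 3 * ∫ ω, |ξ m ω| ^ 3 ∂μ := hind.integral_abs_add_pow_three_le hS (hξ m) (hmean m)
      _ ≤ 3 * ((m : ℝ) * v) ^ ((3 : ℝ) / 2) + 3 * (m * b) + 3 * (v * √(m * v)) + 3 * b := by
        gcongr
        exacts [hv m, hb m]
      _ ≤ 3 * (((m + 1 : ℕ) : ℝ) * v) ^ ((3 : ℝ) / 2) + 3 * ((m + 1 : ℕ) * b) := by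
        push_cast
        rw [add_one_mul]
        linarith

end

theorem stmt_11_general (C lam₁ : ℝ) :
    ∃ c : ℝ, ∀ (Ω : Type) (_ : MeasurableSpace Ω) (μ : Measure Ω),
      IsProbabilityMeasure μ →
      ∀ (n : ℕ) (lam : ℝ), 0 < lam → lam ≤ lam₁ →
      ∀ ξ : ℕ → Ω → ℝ,
        (∀ i, Measurable (ξ i)) →
        iIndepFun ξ μ →
        (∀ i, IdentDistrib (ξ i) (ξ 0) μ μ) →
        (∫ ω, ξ 0 ω ∂μ = 0) →
        MemLp (ξ 0) 3 μ →
        (∫ ω, (ξ 0 ω) ^ 2 ∂μ ≤ lam₁) →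
        (∫ ω, |ξ 0 ω| ^ 3 ∂μ ≤ C / lam ^ ((3 : ℝ) / 2)) →
        ∫ ω, |∑ i ∈ Finset.range n, ξ i ω| ^ 3 ∂μ ≤ c * ((n : ℝ) / lam) ^ ((3 : ℝ) / 2) := by
  refine ⟨3 * lam₁ ^ 3 + 3 * C, fun Ω _ μ _ n lam hlam hlam_le ξ _ hindep hident hmean hL3 hvar
    hthird => ?_⟩
  have hξ : ∀ i, MemLp (ξ i) 3 μ := fun i => (hident i).symm.memLp_snd hL3
  have hmean' : ∀ i, ∫ ω, ξ i ω ∂μ = 0 := fun i => (hident i).integral_eq.trans hmean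
  have hvar' : ∀ i, ∫ ω, ξ i ω ^ 2 ∂μ ≤ lam₁ := fun i =>
    ((hident i).comp (measurable_id.pow_const 2)).integral_eq.trans_le hvar
  have hthird' : ∀ i, ∫ ω, |ξ i ω| ^ 3 ∂μ ≤ C / lam ^ ((3 : ℝ) / 2) := fun i =>
    ((hident i).comp (measurable_id.abs.pow_const 3)).integral_eq.trans_le hthird
  have hb : 0 ≤ C / lam ^ ((3 : ℝ) / 2) := (integral_nonneg fun ω => by positivity).trans hthird
  calc ∫ ω, |∑ i ∈ range n, ξ i ω| ^ 3 ∂μ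
      ≤ 3 * ((n : ℝ) * lam₁) ^ ((3 : ℝ) / 2) + 3 * (n * (C / lam ^ ((3 : ℝ) / 2))) :=
        hindep.integral_abs_sum_range_pow_three_le hξ hmean' hvar' hthird' n
    _ ≤ 3 * (lam₁ ^ 3 * ((n : ℝ) / lam) ^ ((3 : ℝ) / 2))
          + 3 * ((n : ℝ) ^ ((3 : ℝ) / 2) * (C / lam ^ ((3 : ℝ) / 2))) := by
        gcongr
        exacts [mul_rpow_three_halves_le n.cast_nonneg hlam hlam_le,
          Real.natCast_le_rpow_of_one_le n (by norm_num)]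
    _ = (3 * lam₁ ^ 3 + 3 * C) * ((n : ℝ) / lam) ^ ((3 : ℝ) / 2) := by
        rw [Real.div_rpow n.cast_nonneg hlam.le]
        ring

/-- For iid mean-zero real random variables with `Eξ₁² ≤ λ₁` and `E|ξ₁|³ ≤ C/λ^{3/2}`
(`0 < λ ≤ λ₁`), there is a constant `c` depending only on `C` and `λ₁` such that
`E|∑_{i=1}^n ξ_i|³ ≤ c (n/λ)^{3/2}`. -/
theorem stmt_11 (C lam₁ : ℝ) (hC : 0 < C) (hlam₁ : 0 < lam₁) :
    ∃ c : ℝ, ∀ (Ω : Type) (_ : MeasurableSpace Ω) (μ : Measure Ω),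
      IsProbabilityMeasure μ →
      ∀ (n : ℕ) (lam : ℝ), 0 < lam → lam ≤ lam₁ →
      ∀ ξ : ℕ → Ω → ℝ,
        (∀ i, Measurable (ξ i)) →
        iIndepFun ξ μ →
        (∀ i, IdentDistrib (ξ i) (ξ 0) μ μ) →
        (∫ ω, ξ 0 ω ∂μ = 0) →
        MemLp (ξ 0) 3 μ →
        (∫ ω, (ξ 0 ω) ^ 2 ∂μ ≤ lam₁) →
        (∫ ω, |ξ 0 ω| ^ 3 ∂μ ≤ C / lam ^ ((3 : ℝ) / 2)) →
        ∫ ω, |∑ i ∈ Finset.range n, ξ i ω| ^ 3 ∂μ ≤ c * ((n : ℝ) / lam) ^ ((3 : ℝ) / 2) :=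
  stmt_11_general C lam₁
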